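/- For a graph G, a positive integer k, and real x, one has x^{−|V|}·B_q(G,x,k) = U(G; z, x_1, x_2, ...) evaluated at z = x+1 and x_i = x^{−1}·(k)_{q^i}, where (k)_n = k(k−1)···(k−n+1) denotes the falling factorial. -/

import Mathlib

open scoped Classical

/-- A (multi)graph with vertex set a finite set of naturals, edge labels a finite set of
naturals, each edge having an unordered pair of endpoints lying in the vertex set, and a
vertex-weight function. -/
structure WGraph where
  verts : Finset ℕ
  edges : Finset ℕ
  ends : ℕ → Sym2 ℕ
  ends_mem : ∀ e ∈ edges, ∀ v ∈ ends e, v ∈ verts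
  w : ℕ → ℕ

namespace WGraph

/-- Two vertices are joined in the spanning subgraph with edge set `A`. -/
def adj (G : WGraph) (A : Finset ℕ) (u v : ℕ) : Prop := ∃ i ∈ A, G.ends i = s(u, v)

/-- Reachability in the spanning subgraph with edge set `A`. -/
def reach (G : WGraph) (A : Finset ℕ) : ℕ → ℕ → Prop := Relation.ReflTransGen (G.adj A)

/-- The set of connected components of the spanning subgraph `(V, A)`. -/
noncomputable def components (G : WGraph) (A : Finset ℕ) : Finset (Finset ℕ) :=
  G.verts.image (fun v => G.verts.filter (G.reach A v))

/-- The total weight of a set of vertices. -/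
def wt (G : WGraph) (C : Finset ℕ) : ℕ := ∑ v ∈ C, G.w v

/-- All `k`-colourings: maps `V → {0, …, k-1}`, extended by `0` off the vertex set. -/
def allCol (G : WGraph) (k : ℕ) : Set (ℕ → ℕ) :=
  {s | (∀ v ∈ G.verts, s v < k) ∧ ∀ v ∉ G.verts, s v = 0}

/-- Proper `k`-colourings: no edge is monochromatic. -/
def properCol (G : WGraph) (k : ℕ) : Set (ℕ → ℕ) :=
  {s ∈ G.allCol k | ∀ e ∈ G.edges, ∀ a b : ℕ, G.ends e = s(a, b) → s a ≠ s b}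

/-- The weighted `(r,q)`-chromatic function
`M^ω_{r,q}(G;k) = ∑_{s ∈ col(G;k)} r^{∑_{v ∈ V} ω(v) q^{s(v)}}`. -/
noncomputable def Mw (G : WGraph) (r q : ℝ) (k : ℕ) : ℝ :=
  ∑ᶠ s ∈ G.properCol k, r ^ (∑ v ∈ G.verts, (G.w v : ℝ) * q ^ (s v))

/-- The unweighted `(r,q)`-chromatic function
`M_{r,q}(G;k) = ∑_{s ∈ col(G;k)} r^{∑_{v ∈ V} q^{s(v)}}`. -/
noncomputable def M (G : WGraph) (r q : ℝ) (k : ℕ) : ℝ :=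
  ∑ᶠ s ∈ G.properCol k, r ^ (∑ v ∈ G.verts, q ^ (s v))

/-- The weighted `(r,q)`-dichromatic function
`B^ω_{r,q}(G;x,k) = ∑_{A ⊆ E} x^{|A|} ∏_{C ∈ com(A)} ∑_{i=0}^{k-1} r^{ω(C) q^i}`. -/
noncomputable def Bw (G : WGraph) (r q x : ℝ) (k : ℕ) : ℝ :=
  ∑ A ∈ G.edges.powerset, x ^ A.card *
    ∏ C ∈ G.components A, ∑ i ∈ Finset.range k, r ^ ((G.wt C : ℝ) * q ^ i)

/-- The unweighted `(r,q)`-dichromatic function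
`B_{r,q}(G;x,k) = ∑_{A ⊆ E} x^{|A|} ∏_{C ∈ com(A)} ∑_{i=0}^{k-1} r^{|C| q^i}`. -/
noncomputable def B (G : WGraph) (r q x : ℝ) (k : ℕ) : ℝ :=
  ∑ A ∈ G.edges.powerset, x ^ A.card *
    ∏ C ∈ G.components A, ∑ i ∈ Finset.range k, r ^ ((C.card : ℝ) * q ^ i)

/-- Deletion of an edge. -/
def delete (G : WGraph) (e : ℕ) : WGraph where
  verts := G.verts
  edges := G.edges.erase e
  ends := G.ends
  ends_mem := fun i hi => G.ends_mem i (Finset.mem_of_mem_erase hi)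
  w := G.w

/-- Contraction of a non-loop edge `e` with ends `a`, `b`: the vertex `b` is merged into `a`,
whose new weight is `ω(a) + ω(b)`. -/
def contract (G : WGraph) (e a b : ℕ) : WGraph where
  verts := insert a (G.verts.erase b)
  edges := G.edges.erase e
  ends := fun i => (G.ends i).map (fun v => if v = b then a else v)
  ends_mem := by
    intro i hi v hv
    rcases Sym2.mem_map.1 hv with ⟨u, hu, rfl⟩
    by_cases h : u = b
    · simp [h]
    · simp only [if_neg h]
      exact Finset.mem_insert_of_mem
        (Finset.mem_erase.2 ⟨h, G.ends_mem i (Finset.mem_of_mem_erase hi) u hu⟩)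
  w := fun v => if v = a then G.w a + G.w b else G.w v

end WGraph

open WGraph

/-- The falling factorial `(y)_n = y(y−1)⋯(y−n+1)`. -/
def fallFact (y : ℝ) (n : ℕ) : ℝ := ∏ j ∈ Finset.range n, (y - j)

/-- The `q`-dichromate `B_q(G,x,y) = ∑_{A ⊆ E} x^{|A|} ∏_{W ∈ com(A)} (y)_{q^{|W|}}`. -/
noncomputable def Bq (G : WGraph) (q : ℕ) (x y : ℝ) : ℝ :=
  ∑ A ∈ G.edges.powerset, x ^ A.card *
    ∏ C ∈ G.components A, fallFact y (q ^ C.card)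

/-- The `U`-polynomial
`U(G; z, x_1, x_2, …) = ∑_{A ⊆ E} x(τ_A) (z−1)^{|A|−|V|+k(A)}`, where `x(τ_A)` is the
product over components `C` of `(V,A)` of the variable `x_{|C|}`, evaluated at `z` and at
real values `xs i` of the variables `x_i`. -/
noncomputable def U (G : WGraph) (z : ℝ) (xs : ℕ → ℝ) : ℝ :=
  ∑ A ∈ G.edges.powerset, (∏ C ∈ G.components A, xs C.card) *
    (z - 1) ^ (A.card + (G.components A).card - G.verts.card)

/-!
Compare the two sums term by term in `A ⊆ E`. Since
`x^{-|V|} x^{|A|} = x^{-k(A)} x^{|A|-|V|+k(A)}`, the factor `x^{-k(A)}` distributes over the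
`k(A)` components and the terms agree. The only combinatorial input is that
`|A| - |V| + k(A) ≥ 0`, which holds because adding one edge lowers the number of components by
at most one.
-/

namespace WGraph

variable (G : WGraph)

noncomputable def component (A : Finset ℕ) (v : ℕ) : Finset ℕ := G.verts.filter (G.reach A v)

lemma components_eq_image (A : Finset ℕ) : G.components A = G.verts.image (G.component A) :=
  rfl

instance (A : Finset ℕ) : Std.Symm (G.adj A) :=
  ⟨fun _ _ ⟨i, hi, h⟩ => ⟨i, hi, h.trans Sym2.eq_swap⟩⟩

lemma reach_symm {A : Finset ℕ} {u v : ℕ} (h : G.reach A u v) : G.reach A v u :=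
  Std.Symm.symm (r := Relation.ReflTransGen (G.adj A)) _ _ h

lemma reach_mono {A B : Finset ℕ} (hAB : A ⊆ B) {u v : ℕ} (h : G.reach A u v) :
    G.reach B u v :=
  Relation.ReflTransGen.mono (fun _ _ ⟨i, hi, h⟩ => ⟨i, hAB hi, h⟩) u v h

lemma eq_of_reach_empty {u v : ℕ} (h : G.reach ∅ u v) : u = v := by
  induction h with
  | refl => rfl
  | tail _ hadj _ => simp [adj] at hadj

lemma component_eq_of_reach {A : Finset ℕ} {u v : ℕ} (h : G.reach A u v) :
    G.component A u = G.component A v :=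
  Finset.filter_congr fun _ _ => ⟨(G.reach_symm h).trans, h.trans⟩

lemma reach_insert {e a b : ℕ} (hab : G.ends e = s(a, b)) {A : Finset ℕ} {u v : ℕ}
    (h : G.reach (insert e A) u v) : G.reach A u v ∨ G.reach A u a ∨ G.reach A u b := by
  induction h with
  | refl => exact Or.inl .refl
  | tail _ hwz ih =>
    obtain ⟨i, hi, hiwz⟩ := hwz
    rcases Finset.mem_insert.1 hi with rfl | hiA
    · rw [hab, Sym2.eq_iff] at hiwz
      rcases hiwz with ⟨rfl, rfl⟩ | ⟨rfl, rfl⟩ <;> tauto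
    · exact ih.imp_left (·.tail ⟨i, hiA, hiwz⟩)

lemma card_components_empty : (G.components ∅).card = G.verts.card := by
  rw [components_eq_image, Finset.card_image_of_injOn]
  intro u _ v hv huv
  have hv : v ∈ G.component ∅ u := huv ▸ Finset.mem_filter.2 ⟨hv, .refl⟩
  exact G.eq_of_reach_empty (Finset.mem_filter.1 hv).2

lemma card_components_le_card_components_insert_add_one (A : Finset ℕ) {e : ℕ}
    (he : e ∈ G.edges) : (G.components A).card ≤ (G.components (insert e A)).card + 1 := by
  obtain ⟨a, b, hab⟩ : ∃ a b, G.ends e = s(a, b) := (G.ends e).ind fun a b => ⟨a, b, rfl⟩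
  have ha : a ∈ G.verts := G.ends_mem e he a (hab ▸ Sym2.mem_mk_left a b)
  -- away from the components of `a` and `b`, the components of `A` and `insert e A` agree
  set S := G.verts.filter fun v => ¬ G.reach A v a ∧ ¬ G.reach A v b
  have hS : ∀ v ∈ S, G.component (insert e A) v = G.component A v := by
    intro v hv
    obtain ⟨hva, hvb⟩ := (Finset.mem_filter.1 hv).2
    refine Finset.filter_congr fun w _ => ⟨fun h => ?_, G.reach_mono (Finset.subset_insert e A)⟩
    exact (G.reach_insert hab h).resolve_right (not_or.2 ⟨hva, hvb⟩)
  have hle : (G.components A).card ≤ (S.image (G.component A)).card + 2 := by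
    have hsub : G.components A ⊆
        insert (G.component A a) (insert (G.component A b) (S.image (G.component A))) := by
      rw [components_eq_image]
      intro C hC
      obtain ⟨v, hv, rfl⟩ := Finset.mem_image.1 hC
      by_cases hva : G.reach A v a
      · rw [G.component_eq_of_reach hva]
        exact Finset.mem_insert_self _ _
      by_cases hvb : G.reach A v b
      · rw [G.component_eq_of_reach hvb]
        exact Finset.mem_insert_of_mem (Finset.mem_insert_self _ _)
      · exact Finset.mem_insert_of_mem <| Finset.mem_insert_of_mem <|
          Finset.mem_image_of_mem _ (Finset.mem_filter.2 ⟨hv, hva, hvb⟩)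
    calc (G.components A).card
        ≤ (insert (G.component A b) (S.image (G.component A))).card + 1 :=
          (Finset.card_le_card hsub).trans (Finset.card_insert_le _ _)
      _ ≤ (S.image (G.component A)).card + 2 := by grind [Finset.card_insert_le]
  have hlt : (S.image (G.component A)).card + 1 ≤ (G.components (insert e A)).card := by
    have hnot : G.component (insert e A) a ∉ S.image (G.component A) := by
      intro hmem
      obtain ⟨v, hv, hva⟩ := Finset.mem_image.1 hmem
      have hreach : a ∈ G.component (insert e A) v := by
        rw [hS v hv, hva]
        exact Finset.mem_filter.2 ⟨ha, .refl⟩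
      obtain ⟨hva', hvb'⟩ := (Finset.mem_filter.1 hv).2
      rcases G.reach_insert hab (Finset.mem_filter.1 hreach).2 with h | h | h <;> contradiction
    have hsub : insert (G.component (insert e A) a) (S.image (G.component A)) ⊆
        G.components (insert e A) := by
      refine Finset.insert_subset (Finset.mem_image_of_mem _ ha) ?_
      intro C hC
      obtain ⟨v, hv, rfl⟩ := Finset.mem_image.1 hC
      exact hS v hv ▸ Finset.mem_image_of_mem _ (Finset.mem_filter.1 hv).1
    simpa [Finset.card_insert_of_notMem hnot] using Finset.card_le_card hsub
  omega

lemma card_verts_le_card_add_card_components {A : Finset ℕ} (hA : A ⊆ G.edges) :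
    G.verts.card ≤ A.card + (G.components A).card := by
  induction A using Finset.induction_on with
  | empty => simp [card_components_empty]
  | insert e A he ih =>
    have hstep := G.card_components_le_card_components_insert_add_one A
      (hA (Finset.mem_insert_self e A))
    rw [Finset.card_insert_of_notMem he]
    have := ih ((Finset.subset_insert e A).trans hA)
    omega

end WGraph

theorem Bq_eq_U_general (G : WGraph) (q k : ℕ) (x : ℝ) (hx : x ≠ 0) :
    (x ^ G.verts.card)⁻¹ * Bq G q x k =
      U G (x + 1) (fun i => x⁻¹ * fallFact k (q ^ i)) := by
  rw [Bq, U, Finset.mul_sum]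
  refine Finset.sum_congr rfl fun A hA => ?_
  have hle := G.card_verts_le_card_add_card_components (Finset.mem_powerset.1 hA)
  rw [Finset.prod_mul_distrib, Finset.prod_const, add_sub_cancel_right, inv_pow]
  set c := (G.components A).card
  have hpow : x ^ A.card = x ^ G.verts.card * x ^ (A.card + c - G.verts.card) / x ^ c := by
    rw [← pow_add, Nat.add_sub_cancel' hle, pow_add, mul_div_cancel_right₀ _ (pow_ne_zero _ hx)]
  rw [hpow]
  field_simp

/-- For a graph `G`, a positive integer `k` and a nonzero real `x`,
`x^{−|V|}·B_q(G,x,k) = U(G; z, x_1, x_2, …)` evaluated at `z = x+1` and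
`x_i = x^{−1}·(k)_{q^i}`. -/
theorem Bq_eq_U (G : WGraph) (q k : ℕ) (hk : 0 < k) (x : ℝ) (hx : x ≠ 0) :
    (x ^ G.verts.card)⁻¹ * Bq G q x k =
      U G (x + 1) (fun i => x⁻¹ * fallFact k (q ^ i)) :=
  Bq_eq_U_general G q k x hx
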